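/- Two monoids M and E have equivalent categories of right acts, [M^op, Set] ≃ [E^op, Set], if and only if there exists a cyclic projective generator A of the category of right M-acts whose endomorphism monoid is isomorphic to E; in that case the equivalence is given by Hom_M(A, −) and − ⊗_E A. -/

import Mathlib

open CategoryTheory

universe u

/-- The category of right `M`-acts, as contravariant functors `SingleObj M ⥤ Type`. -/
abbrev ActCat (M : Type u) [Monoid M] := (SingleObj M)ᵒᵖ ⥤ Type u

/-- A right `M`-act is cyclic if it is generated by a single element. -/
def CyclicAct {M : Type u} [Monoid M] (A : ActCat M) : Prop :=
  ∃ a : A.obj (Opposite.op (SingleObj.star M)),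
    ∀ y : A.obj (Opposite.op (SingleObj.star M)),
      ∃ m : M, y = A.map (SingleObj.toEnd M m).op a

/-- The hom functor `Hom_M(A, −)`, landing in right `E`-acts via a monoid map
`φ : E →* End A` (`E` acts on `Hom_M(A, X)` by precomposition). -/
def homFunctor {M : Type u} [Monoid M] {E : Type u} [Monoid E] (A : ActCat M)
    (φ : E →* CategoryTheory.End A) : ActCat M ⥤ ActCat E where
  obj X :=
    { obj := fun _ => A ⟶ X
      map := fun e => TypeCat.ofHom (fun f => (φ e.unop : A ⟶ A) ≫ f)
      map_id := by
        intro x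
        apply TypeCat.homEquiv.injective
        funext f
        show (φ ((𝟙 x).unop) : A ⟶ A) ≫ f = f
        rw [show (𝟙 x).unop = (1 : E) from rfl]
        simp [End.one_def]
      map_comp := by
        intro x y z g h
        apply TypeCat.homEquiv.injective
        funext f
        show (φ ((g ≫ h).unop) : A ⟶ A) ≫ f = (φ h.unop : A ⟶ A) ≫ ((φ g.unop : A ⟶ A) ≫ f)
        rw [show (g ≫ h).unop = g.unop * h.unop from rfl]
        rw [map_mul]
        simp [End.mul_def] }
  map g := { app := fun _ => TypeCat.ofHom (fun f => f ≫ g) }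

/-!
An equivalence `ActCat M ≌ ActCat E` carries the regular `E`-act, a cyclic projective generator
with endomorphism monoid `E`, to such an object of `ActCat M`.

Conversely, let `A` be a cyclic projective generator with `E ≃* End A`. Being a generator, `A` has
the regular act `M` as a retract; being cyclic and projective, `A` is itself a retract of `M`.
The first retraction lets one rebuild a morphism `X ⟶ Y` from an `E`-equivariant map
`Hom(A, X) → Hom(A, Y)`, so `Hom_M(A, −)` is fully faithful. The second one, with section `σ`,
gives an explicit inverse `b ⊗ a ↦ b • φ⁻¹(x ↦ a • σ x)` of the unit `B → Hom_M(A, B ⊗_E A)`,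
so `Hom_M(A, −)` is essentially surjective.
-/

universe w

open Opposite

namespace CategoryTheory

variable {C : Type w} [Category.{max w u} C]

theorem projective_yoneda_obj (X : C) : Projective (yoneda.obj X) where
  factors f e he := by
    obtain ⟨y, hy⟩ := (epi_iff_surjective _).1 ((NatTrans.epi_iff_epi_app e).1 he (op X))
      (yonedaEquiv f)
    exact ⟨yonedaEquiv.symm y,
      yonedaEquiv.injective (by rw [yonedaEquiv_comp, Equiv.apply_symm_apply, hy])⟩

theorem IsSeparator.nonempty_retract_yoneda {S : Cᵒᵖ ⥤ Type (max w u)} (hS : IsSeparator S)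
    (X : C) : Nonempty (Retract (yoneda.obj X) S) := by
  -- `covered` sends `f` to the sieve of those `g` for which `g ≫ f` is hit by some
  -- `S ⟶ yoneda.obj X`; since `S` separates, it agrees with the maximal sieve.
  let covered : yoneda.obj X ⟶ Functor.sieves C :=
    { app Y := TypeCat.ofHom fun f =>
        ⟨fun Z g => ∃ (ρ : S ⟶ yoneda.obj X) (s : S.obj (op Z)), ρ.app _ s = g ≫ f,
          fun ⟨ρ, s, hs⟩ g' => ⟨ρ, S.map g'.op s, by
            rw [NatTrans.naturality_apply, hs]; simp⟩⟩
      naturality Y Y' g := by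
        ext f
        apply Sieve.ext
        intro Z g'
        show (∃ ρ s, _ = g' ≫ g.unop ≫ f) ↔ ∃ ρ s, _ = (g' ≫ g.unop) ≫ f
        rw [Category.assoc] }
  let all : yoneda.obj X ⟶ Functor.sieves C :=
    { app Y := TypeCat.ofHom fun _ => (⊤ : Sieve Y.unop) }
  have hcovered : covered = all := hS.def _ _ fun ρ => by
    ext Y s
    refine Sieve.ext fun Z g => ?_
    show (∃ ρ' s', _ = g ≫ ρ.app Y s) ↔ True
    exact iff_true_intro ⟨ρ, S.map g.op s, NatTrans.naturality_apply ρ g.op s⟩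
  obtain ⟨ρ, s, hs⟩ : (covered.app (op X) (𝟙 X)).arrows (𝟙 X) := by
    rw [hcovered]; trivial
  exact ⟨{ i := yonedaEquiv.symm s, r := ρ, retract := yonedaEquiv.injective (by
    rw [yonedaEquiv_comp, Equiv.apply_symm_apply, hs, Category.comp_id]; rfl) }⟩

end CategoryTheory

abbrev regularAct (M : Type u) [Monoid M] : ActCat M := yoneda.obj (SingleObj.star M)

theorem isSeparator_regularAct (M : Type u) [Monoid M] : IsSeparator (regularAct M) :=
  (isSeparator_def _).2 fun _ _ _ _ h => hom_ext_yoneda fun _ p => h p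

theorem cyclicAct_iff_exists_epi {M : Type u} [Monoid M] (A : ActCat M) :
    CyclicAct A ↔ ∃ π : regularAct M ⟶ A, Epi π := by
  simp only [NatTrans.epi_iff_epi_app, epi_iff_surjective]
  constructor
  · rintro ⟨a, ha⟩
    refine ⟨yonedaEquiv.symm a, fun _ y => ?_⟩
    obtain ⟨m, rfl⟩ := ha y
    exact ⟨m, rfl⟩
  · rintro ⟨π, hπ⟩
    refine ⟨yonedaEquiv π, fun y => ?_⟩
    obtain ⟨m, rfl⟩ := hπ _ y
    exact ⟨m, (map_yonedaEquiv π m).symm⟩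

section HomFunctor

variable {M E : Type u} [Monoid M] [Monoid E] (A : ActCat M)

theorem homFunctor_faithful (φ : E →* End A) (hA : IsSeparator A) :
    (homFunctor A φ).Faithful where
  map_injective {_ _} f g hfg :=
    hA.def f g fun h =>
      ConcreteCategory.congr_hom (NatTrans.congr_app hfg (op (SingleObj.star E))) h

variable {A}

theorem homFunctor_obj_hom_app_comp {φ : E →* End A} (hφ : Function.Surjective φ)
    {X Y : ActCat M} (q : (homFunctor A φ).obj X ⟶ (homFunctor A φ).obj Y) (u : End A)
    (h : A ⟶ X) :
    q.app (op (SingleObj.star E)) ((u : A ⟶ A) ≫ h) =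
      (u : A ⟶ A) ≫ q.app (op (SingleObj.star E)) h := by
  obtain ⟨e, rfl⟩ := hφ u
  exact NatTrans.naturality_apply q (SingleObj.toEnd E e).op h

theorem homFunctor_full {φ : E →* End A} (hφ : Function.Surjective φ) (hA : IsSeparator A) :
    (homFunctor A φ).Full where
  map_surjective {X Y} q := by
    obtain ⟨⟨κ, ρ, hκρ⟩⟩ := hA.nonempty_retract_yoneda (SingleObj.star M)
    let k := yonedaEquiv κ
    let lift {Z : ActCat M} (z : Z.obj (op (SingleObj.star M))) : A ⟶ Z :=
      ρ ≫ yonedaEquiv.symm z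
    have lift_app {Z : ActCat M} (z : Z.obj (op (SingleObj.star M))) : (lift z).app _ k = z := by
      change yonedaEquiv (κ ≫ ρ ≫ yonedaEquiv.symm z) = z
      rw [reassoc_of% hκρ, Equiv.apply_symm_apply]
    have lift_comp (h : A ⟶ X) (a : A.obj (op (SingleObj.star M))) :
        lift (h.app _ a) = lift a ≫ h := by
      simp only [lift, Category.assoc, yonedaEquiv_symm_naturality_right]
    let q' (h : A ⟶ X) : A ⟶ Y := q.app (op (SingleObj.star E)) h
    have hq (h : A ⟶ X) (a : A.obj (op (SingleObj.star M))) :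
        (q' (lift (h.app _ a))).app _ k = (q' h).app _ a := by
      dsimp only [q']
      rw [lift_comp, homFunctor_obj_hom_app_comp hφ]
      exact congrArg ((q' h).app _) (lift_app a)
    let f : X ⟶ Y :=
      { app _ := TypeCat.ofHom fun x => (q' (lift x)).app _ k
        naturality _ _ g := by
          ext x
          calc (q' (lift (X.map g x))).app _ k
              = (q' (lift (X.map g ((lift x).app (op (SingleObj.star M)) k)))).app _ k := by
                rw [lift_app]
            _ = (q' (lift ((lift x).app _ (A.map g k)))).app _ k := by
                rw [NatTrans.naturality_apply]; rfl
            _ = (q' (lift x)).app _ (A.map g k) := hq _ _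
            _ = Y.map g ((q' (lift x)).app _ k) := NatTrans.naturality_apply _ _ _ }
    refine ⟨f, ?_⟩
    ext _ h
    change h ≫ f = q' h
    ext _ a
    exact hq h a

end HomFunctor

section Tensor

variable {M E : Type u} [Monoid M] [Monoid E] (A : ActCat M) (φ : E →* End A) (B : ActCat E)

/-- The relation `(b • e, a) ~ (b, e • a)` generating the tensor product `B ⊗_E A`. -/
def TensorRel (p q : B.obj (op (SingleObj.star E)) × A.obj (op (SingleObj.star M))) : Prop :=
  ∃ (e : op (SingleObj.star E) ⟶ op (SingleObj.star E)) (b : B.obj (op (SingleObj.star E)))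
    (a : A.obj (op (SingleObj.star M))), p = (B.map e b, a) ∧ q = (b, (φ e.unop).app _ a)

theorem TensorRel.map {p q} (h : TensorRel A φ B p q)
    (m : op (SingleObj.star M) ⟶ op (SingleObj.star M)) :
    TensorRel A φ B (Prod.map id (A.map m) p) (Prod.map id (A.map m) q) := by
  obtain ⟨e, b, a, rfl, rfl⟩ := h
  exact ⟨e, b, A.map m a, rfl, by rw [Prod.map_apply, NatTrans.naturality_apply]; rfl⟩

def tensorAct : ActCat M where
  obj _ := Quot (TensorRel A φ B)
  map m := TypeCat.ofHom (Quot.map (Prod.map id (A.map m)) fun _ _ h => h.map A φ B m)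
  map_id _ := by
    ext ⟨b, a⟩
    change Quot.mk _ (b, A.map (𝟙 _) a) = Quot.mk _ (b, a)
    rw [A.map_id_apply]
  map_comp _ _ := by
    ext ⟨b, a⟩
    change Quot.mk _ (b, A.map (_ ≫ _) a) = Quot.mk _ (b, A.map _ (A.map _ a))
    rw [A.map_comp_apply]

def tensorUnit : B ⟶ (homFunctor A φ).obj (tensorAct A φ B) where
  app _ := TypeCat.ofHom fun b =>
    { app _ := TypeCat.ofHom fun a => Quot.mk _ (b, a)
      naturality _ _ _ := rfl }
  naturality _ _ e := by
    ext b
    apply NatTrans.ext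
    ext _ a
    exact Quot.sound ⟨e, b, a, rfl, rfl⟩

end Tensor

section TensorUnit

variable {M E : Type u} [Monoid M] [Monoid E] {A : ActCat M}

/-- The endomorphism `x ↦ a • r.i x` of `A`. -/
def retractCoeff (r : Retract A (regularAct M)) (a : A.obj (op (SingleObj.star M))) : End A :=
  r.i ≫ yonedaEquiv.symm a

theorem retractCoeff_yonedaEquiv (r : Retract A (regularAct M)) :
    retractCoeff r (yonedaEquiv r.r) = 1 := by
  rw [retractCoeff, Equiv.symm_apply_apply]
  exact r.retract

theorem retractCoeff_app (r : Retract A (regularAct M)) (f : End A)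
    (a : A.obj (op (SingleObj.star M))) :
    retractCoeff r (f.app _ a) = f * retractCoeff r a := by
  simp only [retractCoeff, End.mul_def, Category.assoc, yonedaEquiv_symm_naturality_right]

variable (φ : E ≃* End A) (B : ActCat E)

/-- The inverse of the unit `B → Hom_M(A, B ⊗_E A)`, before passing to the quotient. -/
def tensorEval (r : Retract A (regularAct M))
    (p : B.obj (op (SingleObj.star E)) × A.obj (op (SingleObj.star M))) :
    B.obj (op (SingleObj.star E)) :=
  B.map (SingleObj.toEnd E (φ.symm (retractCoeff r p.2))).op p.1

theorem tensorEval_eq_of_tensorRel (r : Retract A (regularAct M)) {p q}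
    (h : TensorRel A φ.toMonoidHom B p q) :
    tensorEval φ B r p = tensorEval φ B r q := by
  obtain ⟨e, b, a, rfl, rfl⟩ := h
  change B.map (SingleObj.toEnd E (φ.symm (retractCoeff r a))).op (B.map e b) =
    B.map (SingleObj.toEnd E (φ.symm (retractCoeff r ((φ e.unop).app _ a)))).op b
  rw [retractCoeff_app, map_mul, φ.symm_apply_apply, ← B.map_comp_apply]
  rfl

theorem tensorEval_yonedaEquiv (r : Retract A (regularAct M))
    (b : B.obj (op (SingleObj.star E))) :
    tensorEval φ B r (b, yonedaEquiv r.r) = b := by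
  change B.map (SingleObj.toEnd E (φ.symm (retractCoeff r (yonedaEquiv r.r)))).op b = b
  rw [retractCoeff_yonedaEquiv, map_one, map_one, End.one_def, op_id, B.map_id_apply]

theorem tensorRel_mk_tensorEval (r : Retract A (regularAct M))
    (b : B.obj (op (SingleObj.star E))) (a₁ a : A.obj (op (SingleObj.star M))) :
    Quot.mk (TensorRel A φ.toMonoidHom B) (tensorEval φ B r (b, a₁), a) =
      Quot.mk (TensorRel A φ.toMonoidHom B) (b, A.map (r.i.app _ a).op a₁) :=
  Quot.sound ⟨(SingleObj.toEnd E (φ.symm (retractCoeff r a₁))).op, b, a, rfl, by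
    change _ = (b, (φ (φ.symm (retractCoeff r a₁))).app _ a)
    rw [φ.apply_symm_apply]
    rfl⟩

theorem tensorUnit_app_injective (r : Retract A (regularAct M)) :
    Function.Injective ((tensorUnit A φ.toMonoidHom B).app (op (SingleObj.star E))) := by
  intro b b' hbb'
  have := congrArg (fun h : A ⟶ tensorAct A φ.toMonoidHom B =>
    Quot.lift (tensorEval φ B r) (fun _ _ => tensorEval_eq_of_tensorRel φ B r)
      (h.app _ (yonedaEquiv r.r))) hbb'
  change tensorEval φ B r (b, yonedaEquiv r.r) = tensorEval φ B r (b', yonedaEquiv r.r) at this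
  rwa [tensorEval_yonedaEquiv, tensorEval_yonedaEquiv] at this

theorem tensorUnit_app_surjective (r : Retract A (regularAct M)) :
    Function.Surjective ((tensorUnit A φ.toMonoidHom B).app (op (SingleObj.star E))) := by
  intro (h : A ⟶ tensorAct A φ.toMonoidHom B)
  obtain ⟨⟨b₁, a₁⟩, hb⟩ := Quot.exists_rep (h.app _ (yonedaEquiv r.r))
  have key (a : A.obj (op (SingleObj.star M))) :
      Quot.mk (TensorRel A φ.toMonoidHom B) (tensorEval φ B r (b₁, a₁), a) = h.app _ a := by
    have ha : A.map (r.i.app _ a).op (yonedaEquiv r.r) = a := by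
      rw [map_yonedaEquiv, ← NatTrans.comp_app_apply, r.retract]
      rfl
    conv_rhs => rw [← ha]
    rw [tensorRel_mk_tensorEval, NatTrans.naturality_apply, ← hb]
    rfl
  refine ⟨tensorEval φ B r (b₁, a₁), NatTrans.ext ?_⟩
  ext _ a
  exact key a

theorem isIso_tensorUnit (r : Retract A (regularAct M)) :
    IsIso (tensorUnit A φ.toMonoidHom B) :=
  (NatTrans.isIso_iff_isIso_app _).2 fun _ => (isIso_iff_bijective _).2
    ⟨tensorUnit_app_injective φ B r, tensorUnit_app_surjective φ B r⟩

end TensorUnit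

section Morita

variable {M E : Type u} [Monoid M] [Monoid E]

theorem homFunctor_essSurj {A : ActCat M} (φ : E ≃* End A) (hproj : Projective A)
    (hcyc : CyclicAct A) : (homFunctor A φ.toMonoidHom).EssSurj := by
  obtain ⟨π, _⟩ := (cyclicAct_iff_exists_epi A).1 hcyc
  let r : Retract A (regularAct M) :=
    { i := Projective.factorThru (𝟙 A) π
      r := π
      retract := Projective.factorThru_comp _ _ }
  refine ⟨fun B => ⟨tensorAct A φ.toMonoidHom B, ⟨?_⟩⟩⟩
  have := isIso_tensorUnit φ B r
  exact (asIso (tensorUnit A φ.toMonoidHom B)).symm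

theorem homFunctor_isEquivalence {A : ActCat M} (φ : E ≃* End A) (hproj : Projective A)
    (hsep : IsSeparator A) (hcyc : CyclicAct A) : (homFunctor A φ.toMonoidHom).IsEquivalence where
  faithful := homFunctor_faithful A φ.toMonoidHom hsep
  full := homFunctor_full φ.surjective hsep
  essSurj := homFunctor_essSurj φ hproj hcyc

theorem exists_cyclic_projective_separator_of_equivalence (e : ActCat M ≌ ActCat E) :
    ∃ A : ActCat M, Projective A ∧ IsSeparator A ∧ CyclicAct A ∧
      Nonempty (E ≃* End A) := by
  refine ⟨e.inverse.obj (regularAct E), (e.symm.map_projective_iff _).2 (projective_yoneda_obj _),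
    (isSeparator_regularAct E).of_equivalence e.symm, ?_, ⟨?_⟩⟩
  · obtain ⟨r⟩ := ((isSeparator_regularAct M).of_equivalence e).nonempty_retract_yoneda
      (SingleObj.star E)
    let r' : Retract (e.inverse.obj (regularAct E)) (regularAct M) :=
      (r.map e.inverse).trans (Retract.ofIso (e.unitIso.app _).symm)
    exact (cyclicAct_iff_exists_epi _).2 ⟨r'.r, inferInstance⟩
  · exact (SingleObj.toEnd E).trans ((Yoneda.fullyFaithful.mulEquivEnd _).trans
      (e.fullyFaithfulInverse.mulEquivEnd _))

end Morita

/-- Morita theorem for monoids: the categories of right `M`-acts and right `E`-acts are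
equivalent if and only if there is a cyclic projective generator `A` of the category of
right `M`-acts whose endomorphism monoid is isomorphic to `E`; in that case the
equivalence is realized by the functor `Hom_M(A, −)` (whose left adjoint is `− ⊗_E A`). -/
theorem morita_for_acts {M : Type u} [Monoid M] {E : Type u} [Monoid E] :
    (Nonempty (ActCat M ≌ ActCat E) ↔
      ∃ A : ActCat M, Projective A ∧ IsSeparator A ∧ CyclicAct A ∧
        Nonempty (E ≃* CategoryTheory.End A)) ∧
    (∀ (A : ActCat M) (φ : E ≃* CategoryTheory.End A),
      Projective A → IsSeparator A → CyclicAct A →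
        (homFunctor A φ.toMonoidHom).IsEquivalence) := by
  refine ⟨⟨fun ⟨e⟩ => exists_cyclic_projective_separator_of_equivalence e, ?_⟩,
    fun A φ => homFunctor_isEquivalence φ⟩
  rintro ⟨A, hproj, hsep, hcyc, ⟨φ⟩⟩
  have := homFunctor_isEquivalence φ hproj hsep hcyc
  exact ⟨(homFunctor A φ.toMonoidHom).asEquivalence⟩
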